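/- Let t0 ∈ ℝ, let c > 0, and let K ≥ 0. Let v : ℝ → ℝ be continuous on [t0, ∞) with v(t0) ≥ 0, and suppose that for every t ≥ t0 the upper right Dini derivative satisfies D⁺v(t) ≤ −c·v(t) + K·e^{−c(t−t0)}. Then for every ξ with 0 < ξ < c and every t ≥ t0, v(t) ≤ e^{−ξ(t−t0)}·(v(t0) + K/(c−ξ)). -/

import Mathlib

open Set Filter Topology Real

/-- The upper right Dini derivative of `v` at `t`:
`D⁺v(t) = limsup_{h→0⁺} (v(t+h) − v(t))/h`, valued in `EReal`. -/
noncomputable def upperDini (v : ℝ → ℝ) (t : ℝ) : EReal :=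
  Filter.limsup (fun h : ℝ => (((v (t + h) - v t) / h : ℝ) : EReal))
    (nhdsWithin 0 (Set.Ioi 0))

/-!
Comparing `v` with the solution `exp (-c (x - a)) * (v a + K (x - a))` of the linear equation
`y' = -c y + K exp (-c (x - a))` gives `v t ≤ exp (-c (t - t0)) * (v t0 + K (t - t0))`. The
polynomial factor is absorbed by the exponential: `(c - ξ) s * exp (-(c - ξ) s) ≤ 1`.
-/

theorem eventually_slope_lt_of_upperDini_lt {v : ℝ → ℝ} {x r : ℝ} (h : upperDini v x < r) :
    ∀ᶠ z in 𝓝[>] x, slope v x z < r := by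
  have hquot : ∀ᶠ h in 𝓝[>] (0 : ℝ), (v (x + h) - v x) / h < r := by
    filter_upwards [eventually_lt_of_limsup_lt h] with h hh
    exact_mod_cast hh
  have hshift : Tendsto (fun z : ℝ => z - x) (𝓝[>] x) (𝓝[>] 0) := by
    refine tendsto_nhdsWithin_of_tendsto_nhds_of_eventually_within _ ?_ ?_
    · simpa using ((continuous_sub_right x).tendsto x).mono_left nhdsWithin_le_nhds
    · filter_upwards [self_mem_nhdsWithin] with z hz
      exact mem_Ioi.2 (sub_pos.2 hz)
  filter_upwards [hshift.eventually hquot] with z hz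
  simpa [slope_def_field] using hz

/-- With `ε > 0` the comparison function is a strict supersolution, as the fence lemma requires. -/
theorem le_exp_mul_add_of_upperDini_le_of_pos {v : ℝ → ℝ} {a b c K ε : ℝ}
    (hv : ContinuousOn v (Icc a b))
    (hdini : ∀ x ∈ Ico a b,
      upperDini v x ≤ ((-c * v x + K * exp (-c * (x - a)) : ℝ) : EReal))
    (hε : 0 < ε) {x : ℝ} (hx : x ∈ Icc a b) :
    v x ≤ exp (-c * (x - a)) * (v a + ε + (K + ε) * (x - a)) := by
  set B : ℝ → ℝ := fun x => exp (-c * (x - a)) * (v a + ε + (K + ε) * (x - a))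
  have hB : ∀ x, HasDerivAt B (-c * B x + (K + ε) * exp (-c * (x - a))) x := by
    intro x
    have hexp : HasDerivAt (fun y => exp (-c * (y - a))) (exp (-c * (x - a)) * -c) x := by
      simpa using (((hasDerivAt_id x).sub_const a).const_mul (-c)).exp
    have hlin : HasDerivAt (fun y => v a + ε + (K + ε) * (y - a)) (K + ε) x := by
      simpa using (((hasDerivAt_id x).sub_const a).const_mul (K + ε)).const_add (v a + ε)
    refine (hexp.mul hlin).congr_deriv ?_
    simp only [B]
    ring
  refine image_le_of_liminf_slope_right_lt_deriv_boundary hv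
    (fun x hx r hr => (eventually_slope_lt_of_upperDini_lt
      ((hdini x hx).trans_lt (EReal.coe_lt_coe_iff.2 hr))).frequently)
    (by simp [B]; linarith) hB (fun x _ hxB => ?_) hx
  rw [← hxB]
  have : 0 < ε * exp (-c * (x - a)) := by positivity
  linarith

theorem le_exp_mul_add_of_upperDini_le {v : ℝ → ℝ} {a b c K : ℝ}
    (hv : ContinuousOn v (Icc a b))
    (hdini : ∀ x ∈ Ico a b,
      upperDini v x ≤ ((-c * v x + K * exp (-c * (x - a)) : ℝ) : EReal))
    {x : ℝ} (hx : x ∈ Icc a b) :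
    v x ≤ exp (-c * (x - a)) * (v a + K * (x - a)) := by
  have hlim : Tendsto (fun ε => exp (-c * (x - a)) * (v a + ε + (K + ε) * (x - a))) (𝓝[>] 0)
      (𝓝 (exp (-c * (x - a)) * (v a + 0 + (K + 0) * (x - a)))) :=
    ((by fun_prop : Continuous fun ε => exp (-c * (x - a)) * (v a + ε + (K + ε) * (x - a))).tendsto
      0).mono_left nhdsWithin_le_nhds
  simpa using ge_of_tendsto hlim (eventually_nhdsWithin_of_forall
    fun ε hε => le_exp_mul_add_of_upperDini_le_of_pos hv hdini hε hx)

theorem exp_neg_mul_mul_le_div {d s : ℝ} (hd : 0 < d) : exp (-d * s) * s ≤ 1 / d := by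
  rw [le_div_iff₀ hd]
  calc exp (-d * s) * s * d = d * s * exp (-(d * s)) := by ring_nf
    _ ≤ exp (-1) := mul_exp_neg_le_exp_neg_one _
    _ ≤ 1 := exp_le_one_iff.2 (by norm_num)

theorem exp_neg_mul_mul_add_le {A K c ξ s : ℝ} (hA : 0 ≤ A) (hK : 0 ≤ K) (hs : 0 ≤ s)
    (hξc : ξ < c) :
    exp (-c * s) * (A + K * s) ≤ exp (-ξ * s) * (A + K / (c - ξ)) := by
  have hsplit : exp (-c * s) = exp (-ξ * s) * exp (-(c - ξ) * s) := by
    rw [← exp_add]; ring_nf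
  have hpoly : exp (-(c - ξ) * s) * (K * s) ≤ K / (c - ξ) := by
    calc exp (-(c - ξ) * s) * (K * s) = K * (exp (-(c - ξ) * s) * s) := by ring
      _ ≤ K * (1 / (c - ξ)) := mul_le_mul_of_nonneg_left (exp_neg_mul_mul_le_div (by linarith)) hK
      _ = K / (c - ξ) := by ring
  have hdecay : exp (-(c - ξ) * s) * A ≤ A :=
    mul_le_of_le_one_left hA (exp_le_one_iff.2 (by nlinarith))
  rw [hsplit, mul_assoc]
  gcongr
  linarith [mul_add (exp (-(c - ξ) * s)) A (K * s)]

theorem stmt_2_general (t0 c K : ℝ) (hK : 0 ≤ K)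
    (v : ℝ → ℝ) (hv_cont : ContinuousOn v (Set.Ici t0)) (hv0 : 0 ≤ v t0)
    (hdini : ∀ t, t0 ≤ t →
      upperDini v t ≤ ((-c * v t + K * Real.exp (-c * (t - t0)) : ℝ) : EReal)) :
    ∀ ξ, 0 < ξ → ξ < c →
      ∀ t, t0 ≤ t → v t ≤ Real.exp (-ξ * (t - t0)) * (v t0 + K / (c - ξ)) := by
  intro ξ _ hξc t ht
  calc v t ≤ exp (-c * (t - t0)) * (v t0 + K * (t - t0)) :=
        le_exp_mul_add_of_upperDini_le (hv_cont.mono Icc_subset_Ici_self)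
          (fun x hx => hdini x hx.1) (right_mem_Icc.2 ht)
    _ ≤ exp (-ξ * (t - t0)) * (v t0 + K / (c - ξ)) :=
        exp_neg_mul_mul_add_le hv0 hK (sub_nonneg.2 ht) hξc

theorem stmt_2 (t0 c K : ℝ) (hc : 0 < c) (hK : 0 ≤ K)
    (v : ℝ → ℝ) (hv_cont : ContinuousOn v (Set.Ici t0)) (hv0 : 0 ≤ v t0)
    (hdini : ∀ t, t0 ≤ t →
      upperDini v t ≤ ((-c * v t + K * Real.exp (-c * (t - t0)) : ℝ) : EReal)) :
    ∀ ξ, 0 < ξ → ξ < c →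
      ∀ t, t0 ≤ t → v t ≤ Real.exp (-ξ * (t - t0)) * (v t0 + K / (c - ξ)) :=
  stmt_2_general t0 c K hK v hv_cont hv0 hdini
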